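/- Let f : [0,1] → ℝ be convex on the interval [0, 2/3] and satisfy f(2x) + 2·f(1−x) = 0 for all x ∈ [0, 1/3]. Then f(x) + f(y) + f(z) ≤ 0 for all x, y, z ∈ [0,1] with x + y + z = 2. -/

import Mathlib

/-!
On `[2/3, 1]` the functional equation determines `f` by `2 f(z) = -f(2 - 2z)`, and it forces
`f(2/3) = 0`. Since `x + y + z = 2`, at least one variable is `≥ 2/3`. If two are, the third is
the midpoint of their images under `z ↦ 2 - 2z` and midpoint convexity suffices. If only `z` is,
then `(x + y - 2/3, 2/3)` majorizes `(x, y)` and `x + y - 2/3` is the midpoint of `2 - 2z`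
and `2/3`.
-/

open Set

theorem ConvexOn.map_add_map_le_of_add_eq {𝕜 β : Type*} [Field 𝕜] [LinearOrder 𝕜]
    [IsStrictOrderedRing 𝕜] [AddCommGroup β] [PartialOrder β] [IsOrderedAddMonoid β]
    [Module 𝕜 β] {s : Set 𝕜} {f : 𝕜 → β} (hf : ConvexOn 𝕜 s f) {a b x y : 𝕜}
    (ha : a ∈ s) (hb : b ∈ s) (hax : a ≤ x) (hxb : x ≤ b) (hsum : x + y = a + b) :
    f x + f y ≤ f a + f b := by
  rcases (hax.trans hxb).eq_or_lt with rfl | hab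
  · obtain rfl : x = a := le_antisymm hxb hax
    rw [add_left_cancel hsum]
  set t := (b - x) / (b - a)
  have ht : t * (b - a) = b - x := div_mul_cancel₀ _ (sub_pos.2 hab).ne'
  have ht0 : 0 ≤ t := div_nonneg (by linarith) (by linarith)
  have ht1 : t ≤ 1 := (div_le_one (by linarith)).2 (by linarith)
  have hx : t • a + (1 - t) • b = x := by simp only [smul_eq_mul]; linear_combination -ht
  have hy : (1 - t) • a + t • b = y := by simp only [smul_eq_mul]; linear_combination ht - hsum
  calc f x + f y ≤ (t • f a + (1 - t) • f b) + ((1 - t) • f a + t • f b) := by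
        rw [← hx, ← hy]
        exact add_le_add (hf.2 ha hb ht0 (sub_nonneg.2 ht1) (by ring))
          (hf.2 ha hb (sub_nonneg.2 ht1) ht0 (by ring))
    _ = f a + f b := by module

section FunctionalEquation

variable {f : ℝ → ℝ} (hsym : ∀ x ∈ Icc (0 : ℝ) (1/3), f (2*x) + 2 * f (1 - x) = 0)
include hsym

theorem two_mul_apply_eq_neg_of_mem_Icc {z : ℝ} (hz : z ∈ Icc (2/3 : ℝ) 1) :
    2 * f z = -f (2 - 2*z) := by
  have h := hsym (1 - z) ⟨by linarith [hz.2], by linarith [hz.1]⟩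
  rw [sub_sub_cancel, mul_sub, mul_one] at h
  linarith

theorem apply_two_thirds_eq_zero : f (2/3) = 0 := by
  have h := two_mul_apply_eq_neg_of_mem_Icc hsym (z := 2/3) ⟨le_rfl, by norm_num⟩
  norm_num at h
  linarith

variable (hconv : ConvexOn ℝ (Icc (0 : ℝ) (2/3)) f)
include hconv

theorem add_add_nonpos_of_le_two_thirds {x y z : ℝ} (hx : x ∈ Icc (0 : ℝ) (2/3))
    (hy : y ∈ Icc (0 : ℝ) (2/3)) (hz : z ≤ 1) (hsum : x + y + z = 2) :
    f x + f y + f z ≤ 0 := by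
  obtain ⟨hx0, hx1⟩ := hx
  obtain ⟨hy0, hy1⟩ := hy
  have hz' : z ∈ Icc (2/3 : ℝ) 1 := ⟨by linarith, hz⟩
  have h23 : (2/3 : ℝ) ∈ Icc (0 : ℝ) (2/3) := ⟨by norm_num, le_rfl⟩
  have hs : x + y - 2/3 ∈ Icc (0 : ℝ) (2/3) := ⟨by linarith, by linarith⟩
  have hw : 2 - 2*z ∈ Icc (0 : ℝ) (2/3) := ⟨by linarith, by linarith⟩
  have hxy : f x + f y ≤ f (x + y - 2/3) + f (2/3) :=
    hconv.map_add_map_le_of_add_eq hs h23 (by linarith) hx1 (by ring)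
  have hs2 : f (x + y - 2/3) + f (x + y - 2/3) ≤ f (2 - 2*z) + f (2/3) :=
    hconv.map_add_map_le_of_add_eq hw h23 (by linarith) hs.2 (by linarith)
  linarith [two_mul_apply_eq_neg_of_mem_Icc hsym hz', apply_two_thirds_eq_zero hsym]

theorem add_add_nonpos_of_two_thirds_le {x y z : ℝ} (hy : y ∈ Icc (2/3 : ℝ) 1)
    (hz : z ∈ Icc (2/3 : ℝ) 1) (hsum : x + y + z = 2) :
    f x + f y + f z ≤ 0 := by
  have hy' : 2 - 2*y ∈ Icc (0 : ℝ) (2/3) := ⟨by linarith [hy.2], by linarith [hy.1]⟩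
  have hz' : 2 - 2*z ∈ Icc (0 : ℝ) (2/3) := ⟨by linarith [hz.2], by linarith [hz.1]⟩
  have hx : f x + f x ≤ f (2 - 2*y) + f (2 - 2*z) := by
    rcases le_total (2 - 2*y) (2 - 2*z) with h | h
    · exact hconv.map_add_map_le_of_add_eq hy' hz' (by linarith) (by linarith) (by linarith)
    · rw [add_comm (f (2 - 2*y))]
      exact hconv.map_add_map_le_of_add_eq hz' hy' (by linarith) (by linarith) (by linarith)
  linarith [two_mul_apply_eq_neg_of_mem_Icc hsym hy, two_mul_apply_eq_neg_of_mem_Icc hsym hz]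

end FunctionalEquation

theorem sum_nonpos_of_convex (f : ℝ → ℝ)
    (hconv : ConvexOn ℝ (Set.Icc (0 : ℝ) (2/3)) f)
    (hsym : ∀ x ∈ Set.Icc (0 : ℝ) (1/3), f (2*x) + 2 * f (1 - x) = 0) :
    ∀ x ∈ Set.Icc (0 : ℝ) 1, ∀ y ∈ Set.Icc (0 : ℝ) 1, ∀ z ∈ Set.Icc (0 : ℝ) 1,
      x + y + z = 2 → f x + f y + f z ≤ 0 := by
  rintro x ⟨hx0, hx1⟩ y ⟨hy0, hy1⟩ z ⟨hz0, hz1⟩ hsum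
  have le_two_thirds := @add_add_nonpos_of_le_two_thirds f hsym hconv
  have two_thirds_le := @add_add_nonpos_of_two_thirds_le f hsym hconv
  rcases le_total x (2/3) with hx | hx <;> rcases le_total y (2/3) with hy | hy <;>
    rcases le_total z (2/3) with hz | hz
  · exact le_two_thirds ⟨hx0, hx⟩ ⟨hy0, hy⟩ hz1 hsum
  · exact le_two_thirds ⟨hx0, hx⟩ ⟨hy0, hy⟩ hz1 hsum
  · linarith [le_two_thirds ⟨hx0, hx⟩ ⟨hz0, hz⟩ hy1 (by linarith)]
  · exact two_thirds_le ⟨hy, hy1⟩ ⟨hz, hz1⟩ hsum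
  · linarith [le_two_thirds ⟨hy0, hy⟩ ⟨hz0, hz⟩ hx1 (by linarith)]
  · linarith [two_thirds_le (x := y) ⟨hx, hx1⟩ ⟨hz, hz1⟩ (by linarith)]
  · linarith [two_thirds_le (x := z) ⟨hx, hx1⟩ ⟨hy, hy1⟩ (by linarith)]
  · exact two_thirds_le ⟨hy, hy1⟩ ⟨hz, hz1⟩ hsum
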